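/- arXiv:0901.0826 — 5 statements merged into one kernel-verified Lean document; each statement's English description precedes it below -/
import Mathlib

section
/- Let φ be a pair potential, let a > 0, and let b ≥ 0 and v₀ ≥ 0 be real numbers such that φ⁺(|x−y|) ≥ b whenever x ≠ y lie in one common cube of the partition Δ̄_a, and such that Σ_{Δ'∈Δ̄_a} sup_{y∈Δ'} φ⁻(|x−y|) ≤ v₀ for every x ∈ ℝ^d. Then every finite configuration γ ⊂ ℝ^d satisfies U(γ) ≥ (b/4 − v₀/2) · Σ_{Δ∈Δ̄_a : |γ_Δ|≥2} |γ_Δ|² − (v₀/2)·|γ|. -/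
open MeasureTheory Filter Topology Set
open scoped BigOperators ENNReal NNReal

noncomputable section

attribute [local instance] Classical.propDecidable

/-- Points of `ℝ^d` (Euclidean space). -/
abbrev Pt (d : ℕ) : Type := EuclideanSpace ℝ (Fin d)

/-- The index `r ∈ ℤ^d` of the cube `Δ_a(r)` of the partition `Δ̄_a` containing `x`:
for `a > 0` we have `cubeIdx d a x = r ↔ ∀ i, a*(r i - 1/2) ≤ x i ∧ x i < a*(r i + 1/2)`. -/
def cubeIdx (d : ℕ) (a : ℝ) (x : Pt d) : Fin d → ℤ := fun i => ⌊x i / a + 1/2⌋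

/-- `φ⁺(t) = max {0, φ(t)}`. -/
def phiPlus (φ : ℝ → ℝ) (t : ℝ) : ℝ := max (φ t) 0

/-- `φ⁻(t) = -min {0, φ(t)}`. -/
def phiMinus (φ : ℝ → ℝ) (t : ℝ) : ℝ := max (-(φ t)) 0

/-- Energy `U(γ) = Σ_{{x,y}⊂γ} φ(|x-y|)` of a finite configuration. -/
def energy (d : ℕ) (φ : ℝ → ℝ) (γ : Finset (Pt d)) : ℝ :=
  (∑ p ∈ γ.offDiag, φ (dist p.1 p.2)) / 2

/-- Interaction energy `W(η;γ) = Σ_{x∈η} Σ_{y∈γ} φ(|x-y|)`. -/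
def interW (d : ℕ) (φ : ℝ → ℝ) (η γ : Finset (Pt d)) : ℝ :=
  ∑ x ∈ η, ∑ y ∈ γ, φ (dist x y)

/-- Number of points of `γ` in the cube `Δ_a(r)`, i.e. `|γ_Δ|`. -/
def cubeCount (d : ℕ) (a : ℝ) (γ : Finset (Pt d)) (r : Fin d → ℤ) : ℕ :=
  (γ.filter fun x => cubeIdx d a x = r).card

/-- `Σ_{Δ ∈ Δ̄_a : |γ_Δ| ≥ 2} |γ_Δ|²`. -/
def densSum (d : ℕ) (a : ℝ) (γ : Finset (Pt d)) : ℝ :=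
  ∑ r ∈ γ.image (cubeIdx d a),
    if 2 ≤ cubeCount d a γ r then (cubeCount d a γ r : ℝ) ^ 2 else 0

/-- `b(a) = inf {φ⁺(|x-y|) : x ≠ y lie in one common cube of Δ̄_a}`. -/
def bVal (d : ℕ) (φ : ℝ → ℝ) (a : ℝ) : ℝ :=
  sInf {t : ℝ | ∃ x y : Pt d, x ≠ y ∧ cubeIdx d a x = cubeIdx d a y ∧ t = phiPlus φ (dist x y)}

/-- `v₀(a) = Σ_{Δ'∈Δ̄_a} sup_{x∈Δ₀} sup_{y∈Δ'} φ⁻(|x-y|)` (valued in `ℝ≥0∞`). -/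
def v0E (d : ℕ) (φ : ℝ → ℝ) (a : ℝ) : ℝ≥0∞ :=
  ∑' r : Fin d → ℤ,
    ⨆ x ∈ {x : Pt d | cubeIdx d a x = 0}, ⨆ y ∈ {y : Pt d | cubeIdx d a y = r},
      ENNReal.ofReal (phiMinus φ (dist x y))

/-- Real value of `v₀(a)`. -/
def v0Val (d : ℕ) (φ : ℝ → ℝ) (a : ℝ) : ℝ := (v0E d φ a).toReal

/-- Assumption (A) on the interaction potential. -/
structure AssumptionA (d : ℕ) (φ : ℝ → ℝ) (r₀ R φ₀ φ₁ ε₀ s : ℝ) : Prop where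
  cont : ContinuousOn φ (Set.Ioi (0 : ℝ))
  r0_pos : 0 < r₀
  R_gt : r₀ < R
  phi0_pos : 0 < φ₀
  phi1_pos : 0 < φ₁
  eps0_pos : 0 < ε₀
  s_ge : (d : ℝ) ≤ s
  decay : ∀ t : ℝ, R ≤ t → -(φ₁ / t ^ ((d : ℝ) + ε₀)) ≤ φ t
  core : ∀ t : ℝ, 0 < t → t ≤ r₀ → φ₀ / t ^ s ≤ φ t

/-- `χ₋^a(γ) = 1` iff no cube of `Δ̄_a` contains two or more points of `γ`. -/
def chiM (d : ℕ) (a : ℝ) (γ : Finset (Pt d)) : ℝ :=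
  if ∀ x ∈ γ, ∀ y ∈ γ, cubeIdx d a x = cubeIdx d a y → x = y then 1 else 0

/-- The finite configuration `{y₁,…,y_n}`. -/
def confOf {d n : ℕ} (y : Fin n → Pt d) : Finset (Pt d) := Finset.image y Finset.univ

/-- Weighted grand partition function `1 + Σ_{n≥1} (zⁿ/n!) ∫_{Λⁿ} e^{-βU({x₁,…,xₙ})} w({x₁,…,xₙ})`. -/
def ZW (d : ℕ) (φ : ℝ → ℝ) (z β : ℝ) (Λ : Set (Pt d)) (w : Finset (Pt d) → ℝ) : ℝ :=
  1 + ∑' n : ℕ, (z ^ (n + 1) / (n + 1).factorial) *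
    ∫ y in {y : Fin (n + 1) → Pt d | ∀ i, y i ∈ Λ},
      Real.exp (-β * energy d φ (confOf y)) * w (confOf y)

/-- Grand partition function `Z_Λ(z,β)`. -/
def ZΛ (d : ℕ) (φ : ℝ → ℝ) (z β : ℝ) (Λ : Set (Pt d)) : ℝ := ZW d φ z β Λ fun _ => 1

/-- Dilute (quasi-lattice approximated) partition function `Z_Λ^{(-)}(z,β,a)`. -/
def ZΛm (d : ℕ) (φ : ℝ → ℝ) (z β a : ℝ) (Λ : Set (Pt d)) : ℝ := ZW d φ z β Λ (chiM d a)

/-- `Σ_{n≥0} (zⁿ/n!) ∫_{Λⁿ} e^{-βU(η∪{y₁,…,y_n})} w(η∪{y₁,…,y_n})`. -/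
def corrInt (d : ℕ) (φ : ℝ → ℝ) (z β : ℝ) (Λ : Set (Pt d)) (η : Finset (Pt d))
    (w : Finset (Pt d) → ℝ) : ℝ :=
  Real.exp (-β * energy d φ η) * w η +
  ∑' n : ℕ, (z ^ (n + 1) / (n + 1).factorial) *
    ∫ y in {y : Fin (n + 1) → Pt d | ∀ i, y i ∈ Λ},
      Real.exp (-β * energy d φ (η ∪ confOf y)) * w (η ∪ confOf y)

/-- Finite-volume correlation function `ρ_Λ(η;z,β)`. -/
def rhoΛ (d : ℕ) (φ : ℝ → ℝ) (z β : ℝ) (Λ : Set (Pt d)) (η : Finset (Pt d)) : ℝ :=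
  z ^ η.card / ZΛ d φ z β Λ * corrInt d φ z β Λ η fun _ => 1

/-- Approximated correlation function `ρ_Λ^{(-)}(η;z,β,a)`. -/
def rhoΛm (d : ℕ) (φ : ℝ → ℝ) (z β a : ℝ) (Λ : Set (Pt d)) (η : Finset (Pt d)) : ℝ :=
  z ^ η.card / ZΛm d φ z β a Λ * corrInt d φ z β Λ η (chiM d a)

/-- `ε₁(a)`. -/
def eps1 (d : ℕ) (φ : ℝ → ℝ) (z β a : ℝ) : ℝ :=
  1/2 * z^2 * a^(2*d) * Real.exp (-β * (bVal d φ a - 5 * v0Val d φ a)) *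
    Real.exp (z * a^d * Real.exp (-β * (bVal d φ a - 3 * v0Val d φ a)))

/-- The cube `[-L/2, L/2)^d`. -/
def boxHalf (d : ℕ) (L : ℝ) : Set (Pt d) := {x | ∀ i, -(L/2) ≤ x i ∧ x i < L/2}

/-- The cube `Λ_l = [-a(l+1/2), a(l+1/2))^d`, a union of cubes of `Δ̄_a`. -/
def boxLat (d : ℕ) (a : ℝ) (l : ℕ) : Set (Pt d) :=
  {x | ∀ i, -(a*(l+1/2)) ≤ x i ∧ x i < a*(l+1/2)}

/-! Split `φ = φ⁺ - φ⁻`. Two distinct points in a common cube interact with `φ⁺ ≥ b`, so a cube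
holding `n` points contributes at least `b n (n - 1) ≥ b n² / 2` once `n ≥ 2`. For the attractive
part, weight each point by the occupation number `w` of its cube: by AM-GM,
`Σ_{x,y} φ⁻(|x-y|) ≤ Σ_x w(x) Σ_y φ⁻(|x-y|) / w(y)`, and for fixed `x` the inner sum is an average
over each cube, hence at most one value of `φ⁻` per cube, hence `≤ v₀`. This gives
`Σ_{x,y} φ⁻ ≤ v₀ Σ_Δ |γ_Δ|²`, and `Σ_Δ |γ_Δ|² ≤ Σ_{|γ_Δ| ≥ 2} |γ_Δ|² + |γ|`. -/

open scoped Finset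

section FiberSums

variable {α β : Type*} [DecidableEq β]

theorem Finset.sum_sum_le_sum_sum_mul_div (s : Finset α) {K : α → α → ℝ} {w : α → ℝ}
    (hK : ∀ x y, 0 ≤ K x y) (hsymm : ∀ x y, K x y = K y x) (hw : ∀ x ∈ s, 0 < w x) :
    ∑ x ∈ s, ∑ y ∈ s, K x y ≤ ∑ x ∈ s, ∑ y ∈ s, K x y * (w x / w y) := by
  have hswap : ∑ x ∈ s, ∑ y ∈ s, K x y * (w y / w x) =
      ∑ x ∈ s, ∑ y ∈ s, K x y * (w x / w y) := by
    rw [Finset.sum_comm]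
    simp only [hsymm _ _]
  have hamgm : ∀ x ∈ s, ∀ y ∈ s, 2 * K x y ≤ K x y * (w x / w y) + K x y * (w y / w x) := by
    intro x hx y hy
    have hx := hw x hx
    have hy := hw y hy
    have h2 : 2 ≤ w x / w y + w y / w x := by
      rw [div_add_div _ _ hy.ne' hx.ne', le_div_iff₀ (by positivity)]
      nlinarith [sq_nonneg (w x - w y)]
    nlinarith [hK x y]
  have := Finset.sum_le_sum fun x hx => Finset.sum_le_sum fun y hy => hamgm x hx y hy
  simp only [← Finset.mul_sum, Finset.sum_add_distrib, hswap] at this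
  linarith

theorem Finset.sum_card_fiber (s : Finset α) (c : α → β) :
    ∑ x ∈ s, (#{z ∈ s | c z = c x} : ℝ) = ∑ r ∈ s.image c, (#{z ∈ s | c z = r} : ℝ) ^ 2 := by
  rw [← Finset.sum_fiberwise_of_maps_to fun x hx => Finset.mem_image_of_mem c hx]
  refine Finset.sum_congr rfl fun r _ => ?_
  rw [Finset.sum_congr rfl fun x hx => by rw [(Finset.mem_filter.mp hx).2], Finset.sum_const,
    nsmul_eq_mul, sq]

theorem Finset.exists_sum_div_card_fiber_le [Nonempty α] (s : Finset α) (c : α → β) (g : α → ℝ) :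
    ∃ f : β → α, (∀ r ∈ s.image c, c (f r) = r) ∧
      ∑ y ∈ s, g y / #{z ∈ s | c z = c y} ≤ ∑ r ∈ s.image c, g (f r) := by
  have hmax : ∀ r ∈ s.image c, ∃ y ∈ {z ∈ s | c z = r}, ∀ z ∈ {z ∈ s | c z = r}, g z ≤ g y := by
    intro r hr
    obtain ⟨x, hx, rfl⟩ := Finset.mem_image.mp hr
    exact Finset.exists_max_image _ g ⟨x, Finset.mem_filter.mpr ⟨hx, rfl⟩⟩
  choose! f hf hfmax using hmax
  refine ⟨f, fun r hr => (Finset.mem_filter.mp (hf r hr)).2, ?_⟩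
  rw [← Finset.sum_fiberwise_of_maps_to fun x hx => Finset.mem_image_of_mem c hx]
  refine Finset.sum_le_sum fun r hr => ?_
  have hn : (0 : ℝ) < #{z ∈ s | c z = r} := by exact_mod_cast Finset.card_pos.mpr ⟨_, hf r hr⟩
  calc ∑ y ∈ s with c y = r, g y / #{z ∈ s | c z = c y}
      = ∑ y ∈ s with c y = r, g y / #{z ∈ s | c z = r} :=
        Finset.sum_congr rfl fun y hy => by rw [(Finset.mem_filter.mp hy).2]
    _ ≤ ∑ y ∈ s with c y = r, g (f r) / #{z ∈ s | c z = r} :=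
        Finset.sum_le_sum fun y hy => div_le_div_of_nonneg_right (hfmax r hr y hy) hn.le
    _ = g (f r) := by rw [Finset.sum_const, nsmul_eq_mul]; field_simp

theorem Finset.sum_sum_le_mul_sum_card_fiber_sq [Nonempty α] (s : Finset α) (c : α → β)
    {K : α → α → ℝ} {v : ℝ} (hK : ∀ x y, 0 ≤ K x y) (hsymm : ∀ x y, K x y = K y x)
    (hv : ∀ x (S : Finset β) (f : β → α), (∀ r ∈ S, c (f r) = r) → ∑ r ∈ S, K x (f r) ≤ v) :
    ∑ x ∈ s, ∑ y ∈ s, K x y ≤ v * ∑ r ∈ s.image c, (#{z ∈ s | c z = r} : ℝ) ^ 2 := by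
  set w : α → ℝ := fun x => #{z ∈ s | c z = c x}
  have hw : ∀ x ∈ s, 0 < w x := fun x hx =>
    Nat.cast_pos.mpr (Finset.card_pos.mpr ⟨x, Finset.mem_filter.mpr ⟨hx, rfl⟩⟩)
  have hrow : ∀ x, ∑ y ∈ s, K x y / w y ≤ v := fun x => by
    obtain ⟨f, hf, hle⟩ := s.exists_sum_div_card_fiber_le c (K x)
    exact hle.trans (hv x _ f hf)
  calc ∑ x ∈ s, ∑ y ∈ s, K x y
      ≤ ∑ x ∈ s, ∑ y ∈ s, K x y * (w x / w y) := s.sum_sum_le_sum_sum_mul_div hK hsymm hw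
    _ = ∑ x ∈ s, w x * ∑ y ∈ s, K x y / w y := by
        refine Finset.sum_congr rfl fun x _ => ?_
        rw [Finset.mul_sum]
        exact Finset.sum_congr rfl fun y _ => by ring
    _ ≤ ∑ x ∈ s, w x * v :=
        Finset.sum_le_sum fun x hx => mul_le_mul_of_nonneg_left (hrow x) (hw x hx).le
    _ = v * ∑ r ∈ s.image c, (#{z ∈ s | c z = r} : ℝ) ^ 2 := by
        rw [← Finset.sum_mul, mul_comm, Finset.sum_card_fiber]

theorem Finset.sum_offDiag_fiber_ge [DecidableEq α] (s : Finset α) (c : α → β) {K : α → α → ℝ}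
    {b : ℝ} (hb : ∀ x y, x ≠ y → c x = c y → b ≤ K x y) :
    ∑ r ∈ s.image c, ((#{z ∈ s | c z = r} : ℝ) ^ 2 - #{z ∈ s | c z = r}) * b ≤
      ∑ p ∈ s.offDiag with c p.1 = c p.2, K p.1 p.2 := by
  rw [← Finset.sum_fiberwise_of_maps_to (g := fun p => c p.1) fun p hp =>
    Finset.mem_image_of_mem c (Finset.mem_offDiag.mp (Finset.mem_filter.mp hp).1).1]
  refine Finset.sum_le_sum fun r _ => ?_
  have hfiber : Finset.filter (fun p => c p.1 = r) {p ∈ s.offDiag | c p.1 = c p.2} =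
      {z ∈ s | c z = r}.offDiag := by
    ext p
    simp only [Finset.mem_filter, Finset.mem_offDiag]
    constructor
    · rintro ⟨⟨⟨h1, h2, hne⟩, hc⟩, rfl⟩
      exact ⟨⟨h1, rfl⟩, ⟨h2, hc.symm⟩, hne⟩
    · rintro ⟨⟨h1, rfl⟩, ⟨h2, hc⟩, hne⟩
      exact ⟨⟨⟨h1, h2, hne⟩, hc.symm⟩, rfl⟩
  have hcard : ((#{z ∈ s | c z = r}.offDiag : ℕ) : ℝ) =
      (#{z ∈ s | c z = r} : ℝ) ^ 2 - #{z ∈ s | c z = r} := by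
    rw [Finset.offDiag_card, Nat.cast_sub (Nat.le_mul_self _), Nat.cast_mul, sq]
  rw [hfiber, ← hcard, ← nsmul_eq_mul]
  refine Finset.card_nsmul_le_sum _ _ _ fun p hp => ?_
  obtain ⟨h1, h2, hne⟩ := Finset.mem_offDiag.mp hp
  exact hb _ _ hne ((Finset.mem_filter.mp h1).2.trans (Finset.mem_filter.mp h2).2.symm)

end FiberSums

theorem phiPlus_nonneg (φ : ℝ → ℝ) (t : ℝ) : 0 ≤ phiPlus φ t := le_max_right _ _

theorem phiMinus_nonneg (φ : ℝ → ℝ) (t : ℝ) : 0 ≤ phiMinus φ t := le_max_right _ _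

theorem phiPlus_sub_phiMinus (φ : ℝ → ℝ) (t : ℝ) : phiPlus φ t - phiMinus φ t = φ t :=
  max_zero_sub_max_neg_zero_eq_self (φ t)

theorem superstability_cube_term_le (n : ℕ) {b v : ℝ} (hb : 0 ≤ b) (hv : 0 ≤ v) :
    (b / 4 - v / 2) * (if 2 ≤ n then (n : ℝ) ^ 2 else 0) - v / 2 * n ≤
      (((n : ℝ) ^ 2 - n) * b - v * (n : ℝ) ^ 2) / 2 := by
  split_ifs with hn
  · have hn' : (2 : ℝ) ≤ n := by exact_mod_cast hn
    nlinarith [mul_nonneg hb (mul_nonneg (by positivity : (0 : ℝ) ≤ n) (sub_nonneg.mpr hn'))]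
  · have hsq : (n : ℝ) ^ 2 = n := by
      interval_cases n <;> norm_num
    rw [hsq]
    nlinarith [(by positivity : (0 : ℝ) ≤ n)]

theorem sum_cubeCount_le_two_mul_energy {d : ℕ} {φ : ℝ → ℝ} {a b v0 : ℝ}
    (hb : ∀ x y : Pt d, x ≠ y → cubeIdx d a x = cubeIdx d a y → b ≤ phiPlus φ (dist x y))
    (hv : ∀ x : Pt d, ∀ S : Finset (Fin d → ℤ), ∀ f : (Fin d → ℤ) → Pt d,
      (∀ r ∈ S, cubeIdx d a (f r) = r) → ∑ r ∈ S, phiMinus φ (dist x (f r)) ≤ v0)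
    (γ : Finset (Pt d)) :
    ∑ r ∈ γ.image (cubeIdx d a), ((cubeCount d a γ r : ℝ) ^ 2 - cubeCount d a γ r) * b -
      v0 * ∑ r ∈ γ.image (cubeIdx d a), (cubeCount d a γ r : ℝ) ^ 2 ≤ 2 * energy d φ γ := by
  have hpos : ∑ r ∈ γ.image (cubeIdx d a), ((cubeCount d a γ r : ℝ) ^ 2 - cubeCount d a γ r) * b ≤
      ∑ p ∈ γ.offDiag, phiPlus φ (dist p.1 p.2) :=
    (γ.sum_offDiag_fiber_ge (cubeIdx d a) hb).trans
      (Finset.sum_le_sum_of_subset_of_nonneg (Finset.filter_subset _ _)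
        fun p _ _ => phiPlus_nonneg φ _)
  have hneg : ∑ p ∈ γ.offDiag, phiMinus φ (dist p.1 p.2) ≤
      v0 * ∑ r ∈ γ.image (cubeIdx d a), (cubeCount d a γ r : ℝ) ^ 2 :=
    calc ∑ p ∈ γ.offDiag, phiMinus φ (dist p.1 p.2)
        ≤ ∑ p ∈ γ ×ˢ γ, phiMinus φ (dist p.1 p.2) :=
          Finset.sum_le_sum_of_subset_of_nonneg
            (fun p hp => Finset.mem_product.mpr ⟨(Finset.mem_offDiag.mp hp).1,
              (Finset.mem_offDiag.mp hp).2.1⟩)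
            fun p _ _ => phiMinus_nonneg φ _
      _ = ∑ x ∈ γ, ∑ y ∈ γ, phiMinus φ (dist x y) := Finset.sum_product _ _ _
      _ ≤ _ := γ.sum_sum_le_mul_sum_card_fiber_sq (cubeIdx d a)
          (fun x y => phiMinus_nonneg φ (dist x y)) (fun x y => by rw [dist_comm]) hv
  have hsplit : 2 * energy d φ γ = ∑ p ∈ γ.offDiag, phiPlus φ (dist p.1 p.2) -
      ∑ p ∈ γ.offDiag, phiMinus φ (dist p.1 p.2) := by
    rw [energy, ← Finset.sum_sub_distrib]
    simp only [phiPlus_sub_phiMinus]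
    ring
  linarith

theorem quasi_lattice_superstability_general (d : ℕ) (φ : ℝ → ℝ) (a : ℝ)
    (b v0 : ℝ) (hb0 : 0 ≤ b) (hv00 : 0 ≤ v0)
    (hb : ∀ x y : Pt d, x ≠ y → cubeIdx d a x = cubeIdx d a y → b ≤ phiPlus φ (dist x y))
    (hv : ∀ x : Pt d, ∀ S : Finset (Fin d → ℤ), ∀ f : (Fin d → ℤ) → Pt d,
      (∀ r ∈ S, cubeIdx d a (f r) = r) → ∑ r ∈ S, phiMinus φ (dist x (f r)) ≤ v0)
    (γ : Finset (Pt d)) :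
    (b / 4 - v0 / 2) * densSum d a γ - v0 / 2 * γ.card ≤ energy d φ γ := by
  set n := cubeCount d a γ
  calc (b / 4 - v0 / 2) * densSum d a γ - v0 / 2 * γ.card
      = ∑ r ∈ γ.image (cubeIdx d a),
          ((b / 4 - v0 / 2) * (if 2 ≤ n r then (n r : ℝ) ^ 2 else 0) - v0 / 2 * n r) := by
        rw [densSum, Finset.card_eq_sum_card_image (cubeIdx d a) γ, Finset.sum_sub_distrib,
          Finset.mul_sum]
        push_cast
        rw [Finset.mul_sum]
        rfl
    _ ≤ ∑ r ∈ γ.image (cubeIdx d a), (((n r : ℝ) ^ 2 - n r) * b - v0 * (n r : ℝ) ^ 2) / 2 :=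
        Finset.sum_le_sum fun r _ => superstability_cube_term_le _ hb0 hv00
    _ = (∑ r ∈ γ.image (cubeIdx d a), ((n r : ℝ) ^ 2 - n r) * b -
          v0 * ∑ r ∈ γ.image (cubeIdx d a), (n r : ℝ) ^ 2) / 2 := by
        rw [← Finset.sum_div, Finset.sum_sub_distrib, Finset.mul_sum]
    _ ≤ energy d φ γ := by
        linarith [sum_cubeCount_le_two_mul_energy hb hv γ]

/-- Proposition 2.1, core estimate.  If `φ⁺(|x-y|) ≥ b` whenever `x ≠ y` lie in one
common cube of `Δ̄_a`, and `Σ_{Δ'∈Δ̄_a} sup_{y∈Δ'} φ⁻(|x-y|) ≤ v₀` for every `x` (expressed via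
finite selections of one point per cube), then every finite configuration `γ` satisfies
`U(γ) ≥ (b/4 - v₀/2)·Σ_{Δ : |γ_Δ|≥2} |γ_Δ|² - (v₀/2)·|γ|`. -/
theorem quasi_lattice_superstability (d : ℕ) (hd : 1 ≤ d) (φ : ℝ → ℝ) (a : ℝ) (ha : 0 < a)
    (b v0 : ℝ) (hb0 : 0 ≤ b) (hv00 : 0 ≤ v0)
    (hb : ∀ x y : Pt d, x ≠ y → cubeIdx d a x = cubeIdx d a y → b ≤ phiPlus φ (dist x y))
    (hv : ∀ x : Pt d, ∀ S : Finset (Fin d → ℤ), ∀ f : (Fin d → ℤ) → Pt d,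
      (∀ r ∈ S, cubeIdx d a (f r) = r) → ∑ r ∈ S, phiMinus φ (dist x (f r)) ≤ v0)
    (γ : Finset (Pt d)) :
    (b / 4 - v0 / 2) * densSum d a γ - v0 / 2 * γ.card ≤ energy d φ γ :=
  quasi_lattice_superstability_general d φ a b v0 hb0 hv00 hb hv γ
end
end

section
/- Let φ be a pair potential, let a > 0, and let v₀ ≥ 0 satisfy Σ_{Δ'∈Δ̄_a} sup_{y∈Δ'} φ⁻(|x−y|) ≤ v₀ for every x ∈ ℝ^d. If η and γ are disjoint finite configurations in ℝ^d such that every cube of Δ̄_a contains at most one point of γ, then W(η;γ) ≥ −v₀·|η|; equivalently, e^{−βW(η;γ)} ≤ e^{βv₀|η|} for every β > 0. -/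
open MeasureTheory Filter Topology Set
open scoped BigOperators ENNReal NNReal

noncomputable section

attribute [local instance] Classical.propDecidable

/-- If `Σ_{Δ'∈Δ̄_a} sup_{y∈Δ'} φ⁻(|x-y|) ≤ v₀` for every `x` (expressed via finite
selections of one point per cube), `η` and `γ` are disjoint finite configurations and every cube
of `Δ̄_a` contains at most one point of `γ`, then `W(η;γ) ≥ -v₀·|η|`; equivalently
`e^{-βW(η;γ)} ≤ e^{βv₀|η|}` for every `β > 0`. -/
theorem interW_lower_bound (d : ℕ) (hd : 1 ≤ d) (φ : ℝ → ℝ) (a : ℝ) (ha : 0 < a)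
    (v0 : ℝ) (hv00 : 0 ≤ v0)
    (hv : ∀ x : Pt d, ∀ S : Finset (Fin d → ℤ), ∀ f : (Fin d → ℤ) → Pt d,
      (∀ r ∈ S, cubeIdx d a (f r) = r) → ∑ r ∈ S, phiMinus φ (dist x (f r)) ≤ v0)
    (η γ : Finset (Pt d)) (hdisj : Disjoint η γ)
    (hdil : ∀ x ∈ γ, ∀ y ∈ γ, cubeIdx d a x = cubeIdx d a y → x = y) :
    -(v0 * η.card) ≤ interW d φ η γ ∧
    ∀ β : ℝ, 0 < β →
      Real.exp (-β * interW d φ η γ) ≤ Real.exp (β * v0 * η.card) := by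
  have key : -(v0 * η.card) ≤ interW d φ η γ := by
    set c := cubeIdx d a
    classical
    set f : (Fin d → ℤ) → Pt d := fun r =>
      if h : ∃ y ∈ γ, c y = r then h.choose else 0 with hf
    have hfγ : ∀ y ∈ γ, f (c y) = y := by
      intro y hy
      have h : ∃ y' ∈ γ, c y' = c y := ⟨y, hy, rfl⟩
      have := h.choose_spec
      simp only [hf, dif_pos h]
      exact hdil _ this.1 _ hy this.2
    have hinj : Set.InjOn c γ := by
      intro x hx y hy hxy
      exact hdil x hx y hy hxy
    have hsel : ∀ r ∈ γ.image c, c (f r) = r := by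
      intro r hr
      obtain ⟨y, hy, rfl⟩ := Finset.mem_image.mp hr
      rw [hfγ y hy]
    have hx : ∀ x : Pt d, -v0 ≤ ∑ y ∈ γ, φ (dist x y) := by
      intro x
      have h1 : ∑ r ∈ γ.image c, phiMinus φ (dist x (f r)) ≤ v0 :=
        hv x (γ.image c) f hsel
      have h2 : ∑ r ∈ γ.image c, phiMinus φ (dist x (f r))
          = ∑ y ∈ γ, phiMinus φ (dist x y) := by
        rw [Finset.sum_image (fun p hp q hq h => hinj hp hq h)]
        exact Finset.sum_congr rfl fun y hy => by rw [hfγ y hy]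
      have h3 : ∀ y ∈ γ, -(phiMinus φ (dist x y)) ≤ φ (dist x y) := by
        intro y _
        have : φ (dist x y) ≤ max (-(φ (dist x y))) 0 + φ (dist x y) := by
          nlinarith [le_max_left (-(φ (dist x y))) (0:ℝ),
            le_max_right (-(φ (dist x y))) (0:ℝ)]
        simp only [phiMinus]; linarith [le_max_left (-(φ (dist x y))) (0:ℝ)]
      calc -v0 ≤ -(∑ y ∈ γ, phiMinus φ (dist x y)) := by rw [← h2]; linarith
        _ = ∑ y ∈ γ, -(phiMinus φ (dist x y)) := by rw [Finset.sum_neg_distrib]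
        _ ≤ ∑ y ∈ γ, φ (dist x y) := Finset.sum_le_sum h3
    have : ∑ x ∈ η, (-v0) ≤ ∑ x ∈ η, ∑ y ∈ γ, φ (dist x y) :=
      Finset.sum_le_sum fun x _ => hx x
    simp only [Finset.sum_const, nsmul_eq_mul] at this
    unfold interW
    linarith
  refine ⟨key, fun β hβ => ?_⟩
  apply Real.exp_le_exp.mpr
  nlinarith
end
end

section
/- For all real numbers z > 0, a > 0, β > 0, d ≥ 1 and all reals b, v₀ with b ≥ 4v₀ ≥ 0, the following series estimate for the contribution of one densely occupied cube holds: Σ_{n=2}^{∞} ((a^d z)^n / n!) · exp(−(β/4)(b − 2v₀)·n² + (3/2)·β·v₀·n) ≤ ε₁(a), where ε₁(a) := (1/2)·z²·a^{2d}·e^{−β(b−5v₀)}·exp(z·a^d·e^{−β(b−3v₀)}). -/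
open MeasureTheory Filter Topology Set
open scoped BigOperators ENNReal NNReal

noncomputable section

attribute [local instance] Classical.propDecidable

/-- estimate (3.9)-(3.10).  For `z, a, β > 0`, `d ≥ 1` and `b ≥ 4v₀ ≥ 0`,
`Σ_{n≥2} ((a^d z)^n/n!)·exp(-(β/4)(b-2v₀)n² + (3/2)βv₀n)
  ≤ (1/2)z²a^{2d}e^{-β(b-5v₀)}·exp(z a^d e^{-β(b-3v₀)})`. -/
theorem dense_cube_series_estimate (d : ℕ) (hd : 1 ≤ d) (z a β b v0 : ℝ)
    (hz : 0 < z) (ha : 0 < a) (hβ : 0 < β) (hv0 : 0 ≤ v0) (hb : 4 * v0 ≤ b) :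
    (∑' n : ℕ, if 2 ≤ n then
        (a ^ d * z) ^ n / n.factorial *
          Real.exp (-(β / 4) * (b - 2 * v0) * n ^ 2 + 3 / 2 * β * v0 * n)
      else 0)
      ≤ 1 / 2 * z ^ 2 * a ^ (2 * d) * Real.exp (-β * (b - 5 * v0)) *
          Real.exp (z * a ^ d * Real.exp (-β * (b - 3 * v0))) := by

  classical
  set A : ℝ := a ^ d * z with hA
  have hApos : 0 < A := mul_pos (pow_pos ha d) hz
  set e1 : ℝ := Real.exp (-β * (b - 5 * v0)) with he1
  set e2 : ℝ := Real.exp (-β * (b - 3 * v0)) with he2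
  set x : ℝ := A * e2 with hx
  set C : ℝ := 1 / 2 * A ^ 2 * e1 with hC
  have hCpos : 0 < C := by positivity
  -- the dominating sequence
  set F : ℕ → ℝ := fun n => if 2 ≤ n then C * x ^ (n - 2) / (n - 2).factorial else 0 with hF
  have hFshift : (fun n : ℕ => F (n + 2)) = fun n : ℕ => C * (x ^ n / n.factorial) := by
    funext n
    simp [hF, Nat.le_add_left, mul_div_assoc]
  have hsumH : Summable (fun n : ℕ => C * (x ^ n / n.factorial)) :=
    (Real.summable_pow_div_factorial x).mul_left C
  have hsumF : Summable F := by
    refine (summable_nat_add_iff 2).mp ?_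
    rw [hFshift]; exact hsumH
  -- termwise bound
  have hterm : ∀ n : ℕ,
      (if 2 ≤ n then
        (a ^ d * z) ^ n / n.factorial *
          Real.exp (-(β / 4) * (b - 2 * v0) * n ^ 2 + 3 / 2 * β * v0 * n)
      else 0) ≤ F n := by
    intro n
    by_cases hn : 2 ≤ n
    · obtain ⟨k, rfl⟩ : ∃ k, n = k + 2 := ⟨n - 2, by omega⟩
      simp only [hn, if_true, hF]
      have hkk : (k : ℝ) ≤ (k : ℝ) ^ 2 := by
        have : k ≤ k ^ 2 := Nat.le_self_pow two_ne_zero k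
        exact_mod_cast this
      have hexp : Real.exp (-(β / 4) * (b - 2 * v0) * ((k + 2 : ℕ) : ℝ) ^ 2
            + 3 / 2 * β * v0 * ((k + 2 : ℕ) : ℝ)) ≤ e1 * e2 ^ k := by
        rw [he1, he2, ← Real.exp_nat_mul, ← Real.exp_add]
        apply Real.exp_le_exp.mpr
        push_cast
        nlinarith [mul_nonneg (mul_nonneg hβ.le hv0) (sub_nonneg.mpr hkk),
          mul_nonneg (mul_nonneg hβ.le (by linarith : (0:ℝ) ≤ b - 4 * v0)) (sq_nonneg (k:ℝ)),
          hβ.le, hv0, sq_nonneg (k:ℝ)]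
      have hfact : (2 : ℝ) * k.factorial ≤ ((k + 2).factorial : ℝ) := by
        have hf1 : (1:ℝ) ≤ (k.factorial : ℝ) := by exact_mod_cast k.factorial_pos
        have hk0 : (0:ℝ) ≤ (k:ℝ) := k.cast_nonneg
        have heq : ((k+2).factorial : ℝ) = ((k:ℝ)+2)*(((k:ℝ)+1)*(k.factorial:ℝ)) := by
          push_cast [Nat.factorial_succ]; ring
        rw [heq]; nlinarith
      have hfactpos : (0 : ℝ) < (k.factorial : ℝ) := by positivity
      calc (a ^ d * z) ^ (k + 2) / ((k + 2).factorial : ℝ) *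
            Real.exp (-(β / 4) * (b - 2 * v0) * ((k + 2 : ℕ) : ℝ) ^ 2
              + 3 / 2 * β * v0 * ((k + 2 : ℕ) : ℝ))
          ≤ A ^ (k + 2) / (2 * (k.factorial : ℝ)) * (e1 * e2 ^ k) := by
            rw [← hA]
            exact mul_le_mul (div_le_div_of_nonneg_left (by positivity) (by positivity) hfact)
              hexp (Real.exp_pos _).le (by positivity)
        _ = C * x ^ (k + 2 - 2) / ((k + 2 - 2).factorial : ℝ) := by
            simp only [Nat.add_sub_cancel]
            rw [hC, hx, mul_pow, pow_add]
            field_simp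
            ring
    · simp [hF, hn]
  have hnonneg : ∀ n : ℕ, 0 ≤ (if 2 ≤ n then
        (a ^ d * z) ^ n / n.factorial *
          Real.exp (-(β / 4) * (b - 2 * v0) * n ^ 2 + 3 / 2 * β * v0 * n)
      else 0) := by
    intro n
    by_cases hn : 2 ≤ n
    · simp only [hn, if_true]; positivity
    · simp [hn]
  have hsumL : Summable (fun n : ℕ => if 2 ≤ n then
        (a ^ d * z) ^ n / n.factorial *
          Real.exp (-(β / 4) * (b - 2 * v0) * n ^ 2 + 3 / 2 * β * v0 * n)
      else 0) :=
    Summable.of_nonneg_of_le hnonneg hterm hsumF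
  -- sum of F
  have hFsum : ∑' n, F n = C * Real.exp x := by
    rw [Summable.tsum_eq_zero_add hsumF, Summable.tsum_eq_zero_add ((summable_nat_add_iff 1).mpr hsumF)]
    have h0 : F 0 = 0 := by simp [hF]
    have h1 : F 1 = 0 := by simp [hF]
    have h2 : (fun n : ℕ => F (n + 1 + 1)) = fun n : ℕ => C * (x ^ n / n.factorial) := by
      funext n
      exact congrFun hFshift n
    rw [h0, h1, h2, tsum_mul_left, zero_add, zero_add]
    congr 1
    rw [Real.exp_eq_exp_ℝ, NormedSpace.exp_eq_tsum_div]
  have hRHS : C * Real.exp x =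
      1 / 2 * z ^ 2 * a ^ (2 * d) * Real.exp (-β * (b - 5 * v0)) *
        Real.exp (z * a ^ d * Real.exp (-β * (b - 3 * v0))) := by
    have hpow : a ^ (2 * d) = (a ^ d) ^ 2 := by rw [← pow_mul, Nat.mul_comm]
    rw [hC, hx, hA, he1, he2, hpow]
    ring_nf
  rw [← hRHS, ← hFsum]
  exact Summable.tsum_le_tsum hterm hsumL hsumF
end
end

section
/- Suppose φ satisfies Assumption (A) with s > d, and fix z > 0 and β > 0. Then lim_{a→0} ε₁(a) = 0 and, moreover, lim_{a→0} a^{−d} · log(1 + ε₁(a)) = 0, where ε₁(a) := (1/2)·z²·a^{2d}·e^{−β(b(a)−5v₀(a))}·exp(z·a^d·e^{−β(b(a)−3v₀(a))}). -/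
open MeasureTheory Filter Topology Set
open scoped BigOperators ENNReal NNReal

noncomputable section

attribute [local instance] Classical.propDecidable

/-!
Two points of one cube of side `a` are at distance at most `√d a`, so the core bound
`φ(t) ≥ φ₀ t^{-s}` gives `b(a) ≥ c a^{-s}`. For some `p > 1` with `dp < s` the potential
satisfies `φ⁻(t) ≤ C max(t, R)^{-dp}`; a point of `Δ_a(r)` is at distance at least
`a(|rᵢ| - 1)` from `Δ_a(0)` for every `i`, so this bound is at most `C ∏ᵢ (a uᵢ)^{-p}` with
`uᵢ = max(|rᵢ| - 1, 1)`, and the sum over `r ∈ ℤ^d` defining `v₀(a)` factorises into `d`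
convergent series over `ℤ`: `v₀(a) = O(a^{-dp})`. Since `dp < s`, `b(a) - k v₀(a) → ∞` for
every `k ≥ 0`, so `a^{-d} ε₁(a) → 0`, which gives both limits because `log(1 + ε) ≤ ε`.
-/

open Real

section CubeGeometry

variable {d : ℕ} {a : ℝ}

lemma abs_sub_mul_cubeIdx_le (ha : 0 < a) (x : Pt d) (i : Fin d) :
    |x i - a * cubeIdx d a x i| ≤ a / 2 := by
  have hx : x i = a * (x i / a) := by field_simp
  set u := x i / a
  have hlo : a * ⌊u + 1 / 2⌋ ≤ a * (u + 1 / 2) :=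
    mul_le_mul_of_nonneg_left (Int.floor_le _) ha.le
  have hhi : a * (u + 1 / 2) < a * (⌊u + 1 / 2⌋ + 1) :=
    mul_lt_mul_of_pos_left (Int.lt_floor_add_one _) ha
  rw [abs_le, hx]
  constructor <;> simp only [cubeIdx] <;> linarith

lemma abs_sub_le_of_cubeIdx_eq (ha : 0 < a) {x y : Pt d} (h : cubeIdx d a x = cubeIdx d a y)
    (i : Fin d) : |x i - y i| ≤ a := by
  have hx := abs_sub_mul_cubeIdx_le ha x i
  have hy := abs_sub_mul_cubeIdx_le ha y i
  rw [h] at hx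
  rw [abs_sub_comm] at hy
  linarith [abs_sub_le (x i) (a * cubeIdx d a y i) (y i)]

lemma mul_abs_sub_cubeIdx_le (ha : 0 < a) (x y : Pt d) (i : Fin d) :
    a * |(cubeIdx d a x i : ℝ) - cubeIdx d a y i| ≤ |x i - y i| + a := by
  have hx := abs_sub_mul_cubeIdx_le ha x i
  have hy := abs_sub_mul_cubeIdx_le ha y i
  rw [abs_sub_comm] at hx
  have hmul : a * |(cubeIdx d a x i : ℝ) - cubeIdx d a y i| =
      |a * cubeIdx d a x i - a * cubeIdx d a y i| := by
    rw [← mul_sub, abs_mul, abs_of_pos ha]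
  rw [hmul]
  linarith [abs_sub_le (a * cubeIdx d a x i) (x i) (a * cubeIdx d a y i),
    abs_sub_le (x i) (y i) (a * cubeIdx d a y i)]

lemma abs_sub_le_dist (x y : Pt d) (i : Fin d) : |x i - y i| ≤ dist x y := by
  simpa only [Real.dist_eq] using PiLp.dist_apply_le x y i

lemma dist_le_sqrt_mul_of_abs_sub_le {x y : Pt d} {c : ℝ} (hc : 0 ≤ c)
    (h : ∀ i, |x i - y i| ≤ c) : dist x y ≤ √d * c := by
  have hlip := (PiLp.antilipschitzWith_ofLp 2 (fun _ : Fin d => ℝ)).le_mul_dist x y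
  have hsup : dist x.ofLp y.ofLp ≤ c := (dist_pi_le_iff hc).2 fun i => by
    simpa only [Real.dist_eq] using h i
  simp only [Fintype.card_fin, ENNReal.toReal_div, ENNReal.toReal_one, ENNReal.toReal_ofNat,
    NNReal.coe_rpow, NNReal.coe_natCast] at hlip
  rw [Real.sqrt_eq_rpow]
  exact hlip.trans (by gcongr)

end CubeGeometry

lemma le_bVal {d : ℕ} (hd : 1 ≤ d) {φ : ℝ → ℝ} {r₀ φ₀ s a : ℝ} (hφ₀ : 0 ≤ φ₀) (hs : 0 ≤ s)
    (hcore : ∀ t, 0 < t → t ≤ r₀ → φ₀ / t ^ s ≤ φ t) (ha : 0 < a) (har : √d * a ≤ r₀) :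
    φ₀ / (√d * a) ^ s ≤ bVal d φ a := by
  have hne : {t : ℝ | ∃ x y : Pt d, x ≠ y ∧ cubeIdx d a x = cubeIdx d a y ∧
      t = phiPlus φ (dist x y)}.Nonempty := by
    let y : Pt d := WithLp.toLp 2 fun _ => a / 4
    refine ⟨_, 0, y, fun h => ?_, funext fun i => ?_, rfl⟩
    · have : (0 : ℝ) = a / 4 := congrArg (fun v : Pt d => v ⟨0, hd⟩) h
      linarith
    · have : a / 4 / a + 1 / 2 = 3 / 4 := by field_simp; norm_num
      simp only [cubeIdx, y, PiLp.zero_apply, zero_div, zero_add, this]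
      norm_num [Int.floor_eq_zero_iff]
  refine le_csInf hne ?_
  rintro _ ⟨x, y, hxy, hcube, rfl⟩
  have hpos : 0 < dist x y := dist_pos.2 hxy
  have hle : dist x y ≤ √d * a :=
    dist_le_sqrt_mul_of_abs_sub_le ha.le (abs_sub_le_of_cubeIdx_eq ha hcube)
  calc φ₀ / (√d * a) ^ s ≤ φ₀ / dist x y ^ s := by gcongr
    _ ≤ φ (dist x y) := hcore _ hpos (hle.trans har)
    _ ≤ phiPlus φ (dist x y) := le_max_left _ _

namespace AssumptionA

variable {d : ℕ} {φ : ℝ → ℝ} {r₀ R φ₀ φ₁ ε₀ s : ℝ}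

lemma R_pos (hA : AssumptionA d φ r₀ R φ₀ φ₁ ε₀ s) : 0 < R := hA.r0_pos.trans hA.R_gt

lemma phiMinus_eq_zero (hA : AssumptionA d φ r₀ R φ₀ φ₁ ε₀ s) {t : ℝ} (ht : 0 < t)
    (htr : t ≤ r₀) : phiMinus φ t = 0 := by
  have := (div_pos hA.phi0_pos (rpow_pos_of_pos ht s)).trans_le (hA.core t ht htr)
  exact max_eq_right (by linarith)

lemma bddAbove_phiMinus_Icc (hA : AssumptionA d φ r₀ R φ₀ φ₁ ε₀ s) :
    BddAbove (phiMinus φ '' Icc 0 R) := by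
  have hcont : ContinuousOn (phiMinus φ) (Icc r₀ R) :=
    ((hA.cont.mono fun t (ht : t ∈ Icc r₀ R) => hA.r0_pos.trans_le ht.1).neg).sup
      continuousOn_const
  refine (((bddAbove_singleton (a := phiMinus φ 0)).union (bddAbove_singleton (a := 0))).union
    (isCompact_Icc.bddAbove_image hcont)).mono ?_
  rintro _ ⟨t, ⟨ht0, htR⟩, rfl⟩
  rcases ht0.eq_or_lt with rfl | ht0
  · exact Or.inl (Or.inl rfl)
  rcases le_or_gt t r₀ with htr | htr
  · exact Or.inl (Or.inr (hA.phiMinus_eq_zero ht0 htr))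
  · exact Or.inr ⟨t, ⟨htr.le, htR⟩, rfl⟩

lemma phiMinus_le_of_R_le (hA : AssumptionA d φ r₀ R φ₀ φ₁ ε₀ s) {t : ℝ} (ht : R ≤ t) :
    phiMinus φ t ≤ φ₁ * t ^ (-(d + ε₀)) := by
  have ht0 := hA.R_pos.trans_le ht
  have hdecay := hA.decay t ht
  rw [div_eq_mul_inv, ← rpow_neg ht0.le] at hdecay
  exact max_le (by linarith) (by have := hA.phi1_pos; positivity)

lemma exists_phiMinus_le_mul_max_rpow_neg (hA : AssumptionA d φ r₀ R φ₀ φ₁ ε₀ s) {q : ℝ}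
    (hq : q ≤ d + ε₀) :
    ∃ C, 0 ≤ C ∧ ∀ t, 0 ≤ t → phiMinus φ t ≤ C * max t R ^ (-q) := by
  obtain ⟨M, hM⟩ := hA.bddAbove_phiMinus_Icc
  have hR := hA.R_pos
  have hM0 : 0 ≤ M := (le_max_right _ _).trans (hM ⟨0, ⟨le_rfl, hR.le⟩, rfl⟩)
  refine ⟨max (M * R ^ q) (φ₁ * R ^ (q - (d + ε₀))), by positivity, fun t ht => ?_⟩
  rcases le_total t R with htR | htR
  · rw [max_eq_right htR]
    calc phiMinus φ t ≤ M := hM ⟨t, ⟨ht, htR⟩, rfl⟩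
      _ = M * R ^ q * R ^ (-q) := by rw [mul_assoc, ← rpow_add hR, add_neg_cancel, rpow_zero,
          mul_one]
      _ ≤ _ := by gcongr; exact le_max_left _ _
  · have ht0 := hR.trans_le htR
    rw [max_eq_left htR]
    calc phiMinus φ t ≤ φ₁ * t ^ (-(d + ε₀)) := hA.phiMinus_le_of_R_le htR
      _ = φ₁ * t ^ (q - (d + ε₀)) * t ^ (-q) := by
          rw [mul_assoc, ← rpow_add ht0]; ring_nf
      _ ≤ φ₁ * R ^ (q - (d + ε₀)) * t ^ (-q) := by
          have := rpow_le_rpow_of_nonpos hR htR (by linarith : q - (d + ε₀) ≤ 0)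
          have := hA.phi1_pos
          gcongr
      _ ≤ _ := by gcongr; exact le_max_right _ _

end AssumptionA

lemma ENNReal.tsum_pi_prod_le {ι α : Type*} [Fintype ι] (g : α → ℝ≥0∞) :
    ∑' r : ι → α, ∏ i, g (r i) ≤ (∑' x, g x) ^ Fintype.card ι := by
  classical
  rw [ENNReal.tsum_eq_iSup_sum]
  refine iSup_le fun u => ?_
  calc ∑ r ∈ u, ∏ i, g (r i)
      ≤ ∑ r ∈ Fintype.piFinset fun i => u.image (· i), ∏ i, g (r i) :=
        Finset.sum_le_sum_of_subset fun r hr =>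
          Fintype.mem_piFinset.2 fun i => Finset.mem_image_of_mem _ hr
    _ = ∏ i, ∑ x ∈ u.image (· i), g x := (Finset.prod_univ_sum _ _).symm
    _ ≤ ∏ _i : ι, ∑' x, g x := Finset.prod_le_prod' fun i _ => ENNReal.sum_le_tsum _
    _ = (∑' x, g x) ^ Fintype.card ι := by rw [Finset.prod_const, Finset.card_univ]

lemma summable_max_abs_sub_one_rpow_neg {p : ℝ} (hp : 1 < p) :
    Summable fun n : ℤ => max (|(n : ℝ)| - 1) 1 ^ (-p) := by
  refine ((summable_abs_int_rpow hp).mul_left (2 ^ p)).of_norm_bounded_eventually ?_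
  filter_upwards [eventually_cofinite_ne 0] with n hn
  have hn1 : (1 : ℝ) ≤ |(n : ℝ)| := by exact_mod_cast Int.one_le_abs hn
  have hle : |(n : ℝ)| / 2 ≤ max (|(n : ℝ)| - 1) 1 := by
    rcases le_total |(n : ℝ)| 2 with h | h
    · exact le_max_of_le_right (by linarith)
    · exact le_max_of_le_left (by linarith)
  rw [Real.norm_of_nonneg (rpow_nonneg (by positivity) _)]
  calc max (|(n : ℝ)| - 1) 1 ^ (-p) ≤ (|(n : ℝ)| / 2) ^ (-p) :=
        rpow_le_rpow_of_nonpos (by positivity) hle (by linarith)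
    _ = 2 ^ p * |(n : ℝ)| ^ (-p) := by
        rw [div_rpow (by positivity) zero_le_two, rpow_neg zero_le_two, div_inv_eq_mul,
          mul_comm]

lemma rpow_neg_mul_le_prod_rpow_neg {d : ℕ} {c : Fin d → ℝ} {T p : ℝ} (hc : ∀ i, 0 < c i)
    (hcT : ∀ i, c i ≤ T) (hT : 0 ≤ T) (hp : 0 ≤ p) :
    T ^ (-(d * p)) ≤ ∏ i, c i ^ (-p) := by
  have hT' : T ^ (-(d * p)) = ∏ _i : Fin d, T ^ (-p) := by
    rw [Finset.prod_const, Finset.card_univ, Fintype.card_fin, ← rpow_natCast, ← rpow_mul hT]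
    ring_nf
  rw [hT']
  exact Finset.prod_le_prod (fun i _ => rpow_nonneg hT _)
    fun i _ => rpow_le_rpow_of_nonpos (hc i) (hcT i) (neg_nonpos.2 hp)

lemma mul_max_abs_sub_one_le_max_dist {d : ℕ} {a R : ℝ} (ha : 0 < a) (haR : a ≤ R) {x y : Pt d}
    {r : Fin d → ℤ} (hx : cubeIdx d a x = 0) (hy : cubeIdx d a y = r) (i : Fin d) :
    a * max (|(r i : ℝ)| - 1) 1 ≤ max (dist x y) R := by
  have h := mul_abs_sub_cubeIdx_le ha x y i
  rw [hx, hy] at h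
  simp only [Pi.zero_apply, Int.cast_zero, zero_sub, abs_neg] at h
  rw [mul_max_of_nonneg _ _ ha.le, mul_one]
  exact max_le_max (by linarith [abs_sub_le_dist x y i]) haR

lemma v0Val_le_of_phiMinus_le {d : ℕ} {φ : ℝ → ℝ} {C R p : ℝ} (hC : 0 ≤ C) (hp : 1 < p)
    (hφ : ∀ t, 0 ≤ t → phiMinus φ t ≤ C * max t R ^ (-(d * p))) :
    ∃ C', ∀ a, 0 < a → a ≤ R → v0Val d φ a ≤ C' * a ^ (-(d * p)) := by
  set u : ℤ → ℝ := fun n => max (|(n : ℝ)| - 1) 1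
  have hu : ∀ n, 0 < u n := fun n => zero_lt_one.trans_le (le_max_right _ _)
  set S := ∑' n, u n ^ (-p)
  refine ⟨C * S ^ d, fun a ha haR => ?_⟩
  have hsup : ∀ r : Fin d → ℤ,
      (⨆ x ∈ {x : Pt d | cubeIdx d a x = 0}, ⨆ y ∈ {y : Pt d | cubeIdx d a y = r},
        ENNReal.ofReal (phiMinus φ (dist x y))) ≤
      ENNReal.ofReal (C * a ^ (-(d * p))) * ∏ i, ENNReal.ofReal (u (r i) ^ (-p)) := by
    intro r
    rw [← ENNReal.ofReal_prod_of_nonneg fun i _ => (rpow_nonneg (hu _).le _),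
      ← ENNReal.ofReal_mul (by positivity)]
    refine iSup₂_le fun x hx => iSup₂_le fun y hy => ENNReal.ofReal_le_ofReal ?_
    have hprod := rpow_neg_mul_le_prod_rpow_neg (fun i => mul_pos ha (hu (r i)))
      (mul_max_abs_sub_one_le_max_dist ha haR hx hy) (ha.le.trans (haR.trans (le_max_right _ _)))
      (zero_le_one.trans hp.le)
    calc phiMinus φ (dist x y) ≤ C * max (dist x y) R ^ (-(d * p)) := hφ _ dist_nonneg
      _ ≤ C * ∏ i, (a * u (r i)) ^ (-p) := by gcongr
      _ = C * a ^ (-(d * p)) * ∏ i, u (r i) ^ (-p) := by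
        simp_rw [mul_rpow ha.le (hu _).le, Finset.prod_mul_distrib, Finset.prod_const,
          Finset.card_univ, Fintype.card_fin, ← rpow_natCast, ← rpow_mul ha.le]
        ring_nf
  have hS0 : 0 ≤ S := tsum_nonneg fun n => rpow_nonneg (hu n).le _
  have hS : ∑' n, ENNReal.ofReal (u n ^ (-p)) = ENNReal.ofReal S :=
    (ENNReal.ofReal_tsum_of_nonneg (fun n => rpow_nonneg (hu n).le _)
      (summable_max_abs_sub_one_rpow_neg hp)).symm
  refine ENNReal.toReal_le_of_le_ofReal (by positivity) ?_
  calc v0E d φ a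
      ≤ ∑' r : Fin d → ℤ, ENNReal.ofReal (C * a ^ (-(d * p))) *
          ∏ i, ENNReal.ofReal (u (r i) ^ (-p)) := ENNReal.tsum_le_tsum hsup
    _ ≤ ENNReal.ofReal (C * a ^ (-(d * p))) * ENNReal.ofReal S ^ d := by
      rw [ENNReal.tsum_mul_left, ← hS]
      gcongr
      simpa using ENNReal.tsum_pi_prod_le (ι := Fin d) fun n => ENNReal.ofReal (u n ^ (-p))
    _ = ENNReal.ofReal (C * S ^ d * a ^ (-(d * p))) := by
      rw [← ENNReal.ofReal_pow hS0, ← ENNReal.ofReal_mul (by positivity), mul_right_comm]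

lemma tendsto_pow_nhdsGT_zero {n : ℕ} (hn : n ≠ 0) :
    Tendsto (fun a : ℝ => a ^ n) (𝓝[>] 0) (𝓝 0) :=
  ((continuous_pow n).tendsto' 0 0 (zero_pow hn)).mono_left nhdsWithin_le_nhds

lemma tendsto_mul_rpow_neg_sub_mul_rpow_neg_atTop {c C s q : ℝ} (hc : 0 < c) (hs : 0 < s)
    (hqs : q < s) : Tendsto (fun a : ℝ => c * a ^ (-s) - C * a ^ (-q)) (𝓝[>] 0) atTop := by
  have hsq : 0 < s - q := sub_pos.2 hqs
  have h0 : Tendsto (fun a : ℝ => a ^ (s - q)) (𝓝[>] 0) (𝓝 0) :=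
    ((continuousAt_rpow_const 0 _ (Or.inr hsq.le)).tendsto.mono_left nhdsWithin_le_nhds).trans
      (by rw [zero_rpow hsq.ne'])
  have hlim : Tendsto (fun a : ℝ => c - C * a ^ (s - q)) (𝓝[>] 0) (𝓝 c) := by
    simpa using tendsto_const_nhds.sub (h0.const_mul C)
  refine ((tendsto_rpow_neg_nhdsGT_zero (neg_lt_zero.2 hs)).atTop_mul_pos hc hlim).congr' ?_
  filter_upwards [self_mem_nhdsWithin] with a (ha : 0 < a)
  have : a ^ (-s) * a ^ (s - q) = a ^ (-q) := by rw [← rpow_add ha]; ring_nf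
  linear_combination (-C) * this

namespace AssumptionA

variable {d : ℕ} {φ : ℝ → ℝ} {r₀ R φ₀ φ₁ ε₀ s : ℝ}

lemma tendsto_bVal_sub_mul_v0Val_atTop (hA : AssumptionA d φ r₀ R φ₀ φ₁ ε₀ s) (hd : 1 ≤ d)
    (hs : (d : ℝ) < s) {k : ℝ} (hk : 0 ≤ k) :
    Tendsto (fun a => bVal d φ a - k * v0Val d φ a) (𝓝[>] 0) atTop := by
  have hd0 : (0 : ℝ) < d := by exact_mod_cast hd
  have hs0 : 0 < s := hd0.trans hs
  obtain ⟨p, hp1, hpε, hps⟩ : ∃ p : ℝ, 1 < p ∧ d * p ≤ d + ε₀ ∧ d * p < s := by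
    refine ⟨min (d + ε₀) ((d + s) / 2) / d, ?_, ?_, ?_⟩
    · rw [one_lt_div hd0]
      exact lt_min (by linarith [hA.eps0_pos]) (by linarith)
    · rw [mul_div_cancel₀ _ hd0.ne']
      exact min_le_left _ _
    · rw [mul_div_cancel₀ _ hd0.ne']
      exact (min_le_right _ _).trans_lt (by linarith)
  obtain ⟨C, hC0, hC⟩ := hA.exists_phiMinus_le_mul_max_rpow_neg hpε
  obtain ⟨C', hv⟩ := v0Val_le_of_phiMinus_le hC0 hp1 hC
  have hsd : 0 < √d := Real.sqrt_pos.2 hd0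
  refine tendsto_atTop_mono' _ ?_ (tendsto_mul_rpow_neg_sub_mul_rpow_neg_atTop (C := k * C')
    (div_pos hA.phi0_pos (rpow_pos_of_pos hsd s)) hs0 hps)
  filter_upwards [Ioo_mem_nhdsGT (lt_min (div_pos hA.r0_pos hsd) hA.R_pos)]
    with a ⟨ha, har⟩
  have hb := le_bVal hd hA.phi0_pos.le hs0.le hA.core ha
    (by rw [mul_comm, ← le_div_iff₀ hsd]; exact har.le.trans (min_le_left _ _))
  rw [mul_rpow hsd.le ha.le, ← div_div, div_eq_mul_inv _ (a ^ s), ← rpow_neg ha.le] at hb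
  have := mul_le_mul_of_nonneg_left (hv a ha (har.le.trans (min_le_right _ _))) hk
  linarith

lemma tendsto_exp_neg_mul_bVal_sub_mul_v0Val (hA : AssumptionA d φ r₀ R φ₀ φ₁ ε₀ s)
    (hd : 1 ≤ d) (hs : (d : ℝ) < s) {β k : ℝ} (hβ : 0 < β) (hk : 0 ≤ k) :
    Tendsto (fun a => exp (-β * (bVal d φ a - k * v0Val d φ a))) (𝓝[>] 0) (𝓝 0) := by
  simpa only [neg_mul, Function.comp_def] using tendsto_exp_neg_atTop_nhds_zero.comp
    ((hA.tendsto_bVal_sub_mul_v0Val_atTop hd hs hk).const_mul_atTop hβ)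

end AssumptionA

lemma eps1_nonneg (d : ℕ) (φ : ℝ → ℝ) (z β a : ℝ) : 0 ≤ eps1 d φ z β a := by
  have : 0 ≤ a ^ (2 * d) := by rw [pow_mul]; positivity
  unfold eps1
  positivity

lemma tendsto_eps1_div_pow {d : ℕ} (hd : 1 ≤ d) {φ : ℝ → ℝ} {z β : ℝ}
    (h5 : Tendsto (fun a => exp (-β * (bVal d φ a - 5 * v0Val d φ a))) (𝓝[>] 0) (𝓝 0))
    (h3 : Tendsto (fun a => exp (-β * (bVal d φ a - 3 * v0Val d φ a))) (𝓝[>] 0) (𝓝 0)) :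
    Tendsto (fun a => eps1 d φ z β a / a ^ d) (𝓝[>] 0) (𝓝 0) := by
  have hpow := tendsto_pow_nhdsGT_zero (by omega : d ≠ 0)
  have hlim := ((hpow.mul h5).mul
    ((continuous_exp.tendsto _).comp ((hpow.mul h3).const_mul z))).const_mul (1 / 2 * z ^ 2)
  simp only [mul_zero, zero_mul, exp_zero] at hlim
  refine hlim.congr' ?_
  filter_upwards [self_mem_nhdsWithin] with a (ha : 0 < a)
  simp only [eps1, Function.comp_apply, pow_mul, sq]
  field_simp
  ring

lemma tendsto_log_one_add_div {α : Type*} {l : Filter α} {f g : α → ℝ}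
    (hf : ∀ᶠ x in l, 0 ≤ f x) (hg : ∀ᶠ x in l, 0 < g x)
    (h : Tendsto (fun x => f x / g x) l (𝓝 0)) :
    Tendsto (fun x => log (1 + f x) / g x) l (𝓝 0) := by
  refine tendsto_of_tendsto_of_tendsto_of_le_of_le' tendsto_const_nhds h ?_ ?_
  · filter_upwards [hf, hg] with x hfx hgx
    exact div_nonneg (log_nonneg (by linarith)) hgx.le
  · filter_upwards [hf, hg] with x hfx hgx
    have := log_le_sub_one_of_pos (by linarith : 0 < 1 + f x)
    gcongr
    linarith

theorem eps1_asymptotics_general (d : ℕ) (hd : 1 ≤ d) (φ : ℝ → ℝ)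
    (r₀ R φ₀ φ₁ ε₀ s : ℝ) (hA : AssumptionA d φ r₀ R φ₀ φ₁ ε₀ s) (hs : (d : ℝ) < s)
    (z β : ℝ) (hβ : 0 < β) :
    Tendsto (fun a : ℝ => eps1 d φ z β a) (𝓝[>] (0 : ℝ)) (𝓝 0) ∧
    Tendsto (fun a : ℝ => 1 / a ^ d * Real.log (1 + eps1 d φ z β a))
      (𝓝[>] (0 : ℝ)) (𝓝 0) := by
  have hdiv : Tendsto (fun a => eps1 d φ z β a / a ^ d) (𝓝[>] 0) (𝓝 0) :=
    tendsto_eps1_div_pow hd (hA.tendsto_exp_neg_mul_bVal_sub_mul_v0Val hd hs hβ (by norm_num))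
      (hA.tendsto_exp_neg_mul_bVal_sub_mul_v0Val hd hs hβ (by norm_num))
  have hpos : ∀ᶠ a in 𝓝[>] (0 : ℝ), 0 < a ^ d := by
    filter_upwards [self_mem_nhdsWithin] with a (ha : 0 < a) using pow_pos ha d
  constructor
  · have := (tendsto_pow_nhdsGT_zero (by omega : d ≠ 0)).mul hdiv
    rw [zero_mul] at this
    refine this.congr' ?_
    filter_upwards [hpos] with a ha
    field_simp
  · simp_rw [one_div_mul_eq_div]
    exact tendsto_log_one_add_div (.of_forall fun a => eps1_nonneg d φ z β a) hpos hdiv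

/-- asymptotics (3.10).  Under Assumption (A) with `s > d`, for fixed `z, β > 0`,
`lim_{a→0⁺} ε₁(a) = 0` and `lim_{a→0⁺} a^{-d}·log(1+ε₁(a)) = 0`. -/
theorem eps1_asymptotics (d : ℕ) (hd : 1 ≤ d) (φ : ℝ → ℝ)
    (r₀ R φ₀ φ₁ ε₀ s : ℝ) (hA : AssumptionA d φ r₀ R φ₀ φ₁ ε₀ s) (hs : (d : ℝ) < s)
    (z β : ℝ) (hz : 0 < z) (hβ : 0 < β) :
    Tendsto (fun a : ℝ => eps1 d φ z β a) (𝓝[>] (0 : ℝ)) (𝓝 0) ∧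
    Tendsto (fun a : ℝ => 1 / a ^ d * Real.log (1 + eps1 d φ z β a))
      (𝓝[>] (0 : ℝ)) (𝓝 0) :=
  eps1_asymptotics_general d hd φ r₀ R φ₀ φ₁ ε₀ s hA hs z β hβ
end
end

section
/- Suppose φ satisfies Assumption (A) with s > d, and fix z > 0, β > 0 and a bounded measurable Λ ⊂ ℝ^d. Then lim_{a→0} Z_Λ^(−)(z,β,a) / Z_Λ(z,β) = 1. -/
open MeasureTheory Filter Topology Set
open scoped BigOperators ENNReal NNReal

noncomputable section

attribute [local instance] Classical.propDecidable

/-! Inside a cube of side `a` two points are at distance at most `a√d`, where the core gives a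
repulsion `≳ a^{-s}`, while a bounded region meets only `O(a^{-d})` cubes. Since `s > d`, for one
small fixed `a` the Cauchy–Schwarz count of same-cube pairs makes the energy of every configuration
in `Λ` bounded below (stability in a bounded region). The integrands of both partition functions
are then bounded by `e^{βC}`, uniformly in `a`, and the series is dominated by `e^{βC} (z|Λ|)ⁿ/n!`.
For a fixed configuration `χ₋^a = 1` once the cubes are smaller than its minimal distance, so
dominated convergence for the integrals and then for the series gives `Z_Λ^(−) → Z_Λ ≥ 1`. -/

theorem Finset.sq_card_le_card_image_mul_card_filter_eq {α β : Type*} [DecidableEq β]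
    (f : α → β) (s : Finset α) :
    s.card ^ 2 ≤ (s.image f).card * ((s ×ˢ s).filter fun p => f p.1 = f p.2).card := by
  have hpairs : ((s ×ˢ s).filter fun p => f p.1 = f p.2).card
      = ∑ b ∈ s.image f, (s.filter fun x => f x = b).card ^ 2 := by
    rw [Finset.card_eq_sum_card_fiberwise (f := fun p => f p.1) (t := s.image f)
      fun p hp => Finset.mem_image_of_mem f (Finset.mem_product.mp (Finset.mem_filter.mp hp).1).1]
    refine Finset.sum_congr rfl fun b _ => ?_
    rw [sq, ← Finset.card_product, Finset.filter_filter]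
    congr 1
    ext p
    simp only [Finset.mem_filter, Finset.mem_product]
    constructor
    · rintro ⟨⟨h1, h2⟩, h12, rfl⟩
      exact ⟨⟨h1, rfl⟩, h2, h12.symm⟩
    · rintro ⟨⟨h1, rfl⟩, h2, h12⟩
      exact ⟨⟨h1, h2⟩, h12.symm, rfl⟩
  rw [hpairs, Finset.card_eq_sum_card_image f s]
  exact sq_sum_le_card_mul_sum_sq

lemma dist_le_of_cubeIdx_eq {d : ℕ} {a : ℝ} (ha : 0 < a) {x y : Pt d}
    (h : cubeIdx d a x = cubeIdx d a y) : dist x y ≤ a * Real.sqrt d := by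
  have hcoord : ∀ i, dist (x i) (y i) ≤ a := fun i => by
    have h1 := Int.abs_sub_lt_one_of_floor_eq_floor (congrFun h i)
    rw [add_sub_add_right_eq_sub, ← sub_div, abs_div, abs_of_pos ha, div_lt_one ha] at h1
    exact (Real.dist_eq _ _).trans_le h1.le
  calc dist x y = Real.sqrt (∑ i, dist (x i) (y i) ^ 2) := EuclideanSpace.dist_eq x y
    _ ≤ Real.sqrt (∑ _i : Fin d, a ^ 2) := by
      gcongr with i
      exact hcoord i
    _ = a * Real.sqrt d := by
      rw [Finset.sum_const, Finset.card_univ, Fintype.card_fin, nsmul_eq_mul,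
        Real.sqrt_mul (Nat.cast_nonneg d), Real.sqrt_sq ha.le, mul_comm]

lemma cubeIdx_mem_Icc {d : ℕ} {a D : ℝ} (ha : 0 < a) {x : Pt d} (hx : ‖x‖ ≤ D) (i : Fin d) :
    cubeIdx d a x i ∈ Finset.Icc (-⌈D / a⌉) ⌈D / a⌉ := by
  have hxi : |x i| ≤ D := by simpa using (PiLp.norm_apply_le x i).trans hx
  obtain ⟨hlo, hhi⟩ := abs_le.mp hxi
  have hlo' : -(D / a) ≤ x i / a := by rw [← neg_div]; gcongr
  have hhi' : x i / a ≤ D / a := by gcongr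
  have hceil := Int.le_ceil (D / a)
  rw [Finset.mem_Icc, cubeIdx, Int.le_floor, Int.floor_le_iff]
  push_cast
  constructor <;> linarith

lemma card_image_cubeIdx_le {d : ℕ} {a D : ℝ} (ha : 0 < a) (hD : 0 ≤ D)
    {γ : Finset (Pt d)} (hγ : ∀ x ∈ γ, ‖x‖ ≤ D) :
    ((γ.image (cubeIdx d a)).card : ℝ) ≤ (2 * D / a + 3) ^ d := by
  have hsub : γ.image (cubeIdx d a) ⊆ Fintype.piFinset fun _ => Finset.Icc (-⌈D / a⌉) ⌈D / a⌉ :=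
    fun r hr => by
      obtain ⟨x, hx, rfl⟩ := Finset.mem_image.mp hr
      exact Fintype.mem_piFinset.mpr (cubeIdx_mem_Icc ha (hγ x hx))
  have hIcc : ((Finset.Icc (-⌈D / a⌉) ⌈D / a⌉).card : ℝ) ≤ 2 * D / a + 3 := by
    have h0 : (0 : ℤ) ≤ ⌈D / a⌉ := Int.ceil_nonneg (div_nonneg hD ha.le)
    have hcard : ((Finset.Icc (-⌈D / a⌉) ⌈D / a⌉).card : ℤ) = 2 * ⌈D / a⌉ + 1 := by
      rw [Int.card_Icc]; omega
    rw [← Int.cast_natCast, hcard]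
    push_cast
    linarith [Int.ceil_lt_add_one (D / a), mul_div_assoc 2 D a]
  calc ((γ.image (cubeIdx d a)).card : ℝ)
      ≤ ((Fintype.piFinset fun _ : Fin d => Finset.Icc (-⌈D / a⌉) ⌈D / a⌉).card : ℝ) := by
        exact_mod_cast Finset.card_le_card hsub
    _ = ((Finset.Icc (-⌈D / a⌉) ⌈D / a⌉).card : ℝ) ^ d := by
        simp [Fintype.card_piFinset]
    _ ≤ (2 * D / a + 3) ^ d := by gcongr

lemma neg_sq_div_le_energy {d : ℕ} {φ : ℝ → ℝ} {a c M : ℝ} (ha : 0 < a) (hM : 0 ≤ M)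
    (hφM : ∀ t, 0 < t → -M ≤ φ t) (hφc : ∀ t, 0 < t → t ≤ a * Real.sqrt d → c ≤ φ t)
    (γ : Finset (Pt d)) (hcubes : (M + 1) * (γ.image (cubeIdx d a)).card ≤ c + M) :
    -(c ^ 2 / 8) ≤ energy d φ γ := by
  set q := cubeIdx d a
  set n : ℝ := (γ.card : ℝ)
  set S : ℝ := (((γ ×ˢ γ).filter fun p => q p.1 = q p.2).card : ℝ)
  set g : Pt d × Pt d → ℝ := fun p => (c + M) * (if q p.1 = q p.2 then 1 else 0) - M
  have hg : ∀ p ∈ γ.offDiag, g p ≤ φ (dist p.1 p.2) := by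
    intro p hp
    have hpos : 0 < dist p.1 p.2 := dist_pos.mpr (Finset.mem_offDiag.mp hp).2.2
    by_cases hq : q p.1 = q p.2
    · simpa [g, hq] using hφc _ hpos (dist_le_of_cubeIdx_eq ha hq)
    · simpa [g, hq] using hφM _ hpos
  have hsum_prod : ∑ p ∈ γ ×ˢ γ, g p = (c + M) * S - M * n ^ 2 := by
    simp only [g, Finset.sum_sub_distrib, ← Finset.mul_sum, Finset.sum_boole, Finset.sum_const,
      Finset.card_product, nsmul_eq_mul, S, n]
    push_cast
    ring
  have hsum_diag : ∑ p ∈ γ.diag, g p = c * n := by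
    rw [Finset.sum_congr rfl fun p hp => show g p = c by
      simp [g, (Finset.mem_diag.mp hp).2]]
    simp [Finset.diag_card, n, mul_comm]
  have hsum_offDiag : ∑ p ∈ γ.offDiag, g p = (c + M) * S - M * n ^ 2 - c * n := by
    rw [← hsum_prod, ← hsum_diag, ← Finset.diag_union_offDiag,
      Finset.sum_union (Finset.disjoint_diag_offDiag γ)]
    ring
  have hcs : n ^ 2 ≤ (γ.image q).card * S := by
    simp only [n, S]
    exact_mod_cast Finset.sq_card_le_card_image_mul_card_filter_eq q γ
  have hS : (M + 1) * n ^ 2 ≤ (c + M) * S := by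
    calc (M + 1) * n ^ 2 ≤ (M + 1) * ((γ.image q).card * S) := by gcongr
      _ = (M + 1) * (γ.image q).card * S := by ring
      _ ≤ (c + M) * S := by gcongr
  have hsum := Finset.sum_le_sum hg
  rw [hsum_offDiag] at hsum
  unfold energy
  nlinarith [sq_nonneg (n - c / 2)]

namespace AssumptionA

variable {d : ℕ} {φ : ℝ → ℝ} {r₀ R φ₀ φ₁ ε₀ s : ℝ}

lemma exists_lower_bound (hA : AssumptionA d φ r₀ R φ₀ φ₁ ε₀ s) :
    ∃ M, 0 ≤ M ∧ ∀ t, 0 < t → -M ≤ φ t := by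
  obtain ⟨m, hm⟩ := (isCompact_Icc (a := r₀) (b := R)).bddBelow_image
    (hA.cont.mono fun t ht => hA.r0_pos.trans_le ht.1)
  set M := max (max (-m) (φ₁ / R ^ ((d : ℝ) + ε₀))) 0
  have hMm : -m ≤ M := (le_max_left _ _).trans (le_max_left _ _)
  have hMdecay : φ₁ / R ^ ((d : ℝ) + ε₀) ≤ M := (le_max_right _ _).trans (le_max_left _ _)
  have hM : 0 ≤ M := le_max_right _ _
  refine ⟨M, hM, fun t ht => ?_⟩
  rcases le_or_gt t r₀ with htr₀ | hr₀t
  · have := hA.core t ht htr₀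
    have := div_pos hA.phi0_pos (Real.rpow_pos_of_pos ht s)
    linarith
  rcases le_or_gt t R with htR | hRt
  · linarith [hm ⟨t, ⟨hr₀t.le, htR⟩, rfl⟩]
  · have hdecay : φ₁ / t ^ ((d : ℝ) + ε₀) ≤ φ₁ / R ^ ((d : ℝ) + ε₀) := by
      have : 0 ≤ (d : ℝ) + ε₀ := by positivity [hA.eps0_pos.le]
      have hR : 0 < R := hA.r0_pos.trans hA.R_gt
      gcongr
      exact hA.phi1_pos.le
    linarith [hA.decay t hRt.le]

end AssumptionA

lemma tendsto_pow_mul_rpow_nhdsGT_zero {d : ℕ} {s : ℝ} (hs : (d : ℝ) < s) (K D : ℝ) :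
    Tendsto (fun a : ℝ => K * (2 * D / a + 3) ^ d * a ^ s) (𝓝[>] 0) (𝓝 0) := by
  have hcont : ContinuousAt (fun a : ℝ => K * (2 * D + 3 * a) ^ d * a ^ (s - d)) 0 :=
    (continuousAt_const.mul ((continuousAt_const.add (continuousAt_const.mul continuousAt_id)).pow
      d)).mul (Real.continuousAt_rpow_const 0 (s - d) (Or.inr (sub_pos.mpr hs).le))
  have hzero : K * (2 * D + 3 * 0) ^ d * (0 : ℝ) ^ (s - d) = 0 := by
    rw [Real.zero_rpow (sub_pos.mpr hs).ne', mul_zero]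
  have hlim := hcont.tendsto.mono_left (nhdsWithin_le_nhds (s := Set.Ioi 0))
  rw [hzero] at hlim
  refine hlim.congr' ?_
  filter_upwards [self_mem_nhdsWithin] with a (ha : 0 < a)
  have hcubes : (2 * D / a + 3) ^ d * a ^ d = (2 * D + 3 * a) ^ d := by
    rw [← mul_pow]
    field_simp
  rw [show s = (s - d) + d by ring, Real.rpow_add ha, Real.rpow_natCast, sub_add_cancel, ← hcubes]
  ring

/-- With `s > d` the core repulsion inside one cube of side `a` outgrows the number of cubes
meeting a ball as `a → 0`. -/
lemma AssumptionA.exists_cube_scale {d : ℕ} {φ : ℝ → ℝ} {r₀ R φ₀ φ₁ ε₀ s : ℝ}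
    (hA : AssumptionA d φ r₀ R φ₀ φ₁ ε₀ s) (hd : 0 < d) (hs : (d : ℝ) < s) {M : ℝ} (hM : 0 ≤ M)
    (D : ℝ) :
    ∃ a > 0, a * Real.sqrt d ≤ r₀ ∧
      (M + 1) * (2 * D / a + 3) ^ d ≤ φ₀ / (a * Real.sqrt d) ^ s + M := by
  have hsqrt : 0 < Real.sqrt d := Real.sqrt_pos.mpr (Nat.cast_pos.mpr hd)
  have hsmall : Tendsto (fun a : ℝ => a * Real.sqrt d) (𝓝[>] 0) (𝓝 0) :=
    ((continuous_mul_const _).tendsto' 0 0 (zero_mul _)).mono_left nhdsWithin_le_nhds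
  have hbig := (tendsto_pow_mul_rpow_nhdsGT_zero hs ((M + 1) * Real.sqrt d ^ s) D).eventually
    (gt_mem_nhds hA.phi0_pos)
  obtain ⟨a, ha, har₀, hcore⟩ :=
    (eventually_mem_nhdsWithin.and ((hsmall.eventually (ge_mem_nhds hA.r0_pos)).and hbig)).exists
  refine ⟨a, ha, har₀, ?_⟩
  have hpos : 0 < (a * Real.sqrt d) ^ s := Real.rpow_pos_of_pos (mul_pos ha hsqrt) s
  rw [Real.mul_rpow ha.le hsqrt.le] at hpos ⊢
  have : (M + 1) * (2 * D / a + 3) ^ d ≤ φ₀ / (a ^ s * Real.sqrt d ^ s) := by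
    rw [le_div_iff₀ hpos]
    linarith
  linarith

theorem AssumptionA.exists_energy_lower_bound {d : ℕ} {φ : ℝ → ℝ} {r₀ R φ₀ φ₁ ε₀ s : ℝ}
    (hA : AssumptionA d φ r₀ R φ₀ φ₁ ε₀ s) (hd : 0 < d) (hs : (d : ℝ) < s) {Λ : Set (Pt d)}
    (hΛ : Bornology.IsBounded Λ) :
    ∃ C, ∀ γ : Finset (Pt d), ↑γ ⊆ Λ → -C ≤ energy d φ γ := by
  obtain ⟨M, hM, hφM⟩ := hA.exists_lower_bound
  obtain ⟨D, hΛD⟩ := hΛ.subset_closedBall 0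
  obtain ⟨a, ha, har₀, hcubes⟩ := hA.exists_cube_scale hd hs hM (max D 0)
  set c := φ₀ / (a * Real.sqrt d) ^ s
  have hφc : ∀ t, 0 < t → t ≤ a * Real.sqrt d → c ≤ φ t := fun t ht hta =>
    calc c ≤ φ₀ / t ^ s :=
          div_le_div_of_nonneg_left hA.phi0_pos.le (Real.rpow_pos_of_pos ht s)
            (Real.rpow_le_rpow ht.le hta (by linarith [hA.s_ge, (Nat.cast_nonneg d : (0 : ℝ) ≤ d)]))
      _ ≤ φ t := hA.core t ht (hta.trans har₀)
  refine ⟨c ^ 2 / 8, fun γ hγ => neg_sq_div_le_energy ha hM hφM hφc γ ?_⟩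
  have hγD : ∀ x ∈ γ, ‖x‖ ≤ max D 0 := fun x hx =>
    (mem_closedBall_zero_iff.mp (hΛD (hγ hx))).trans (le_max_left _ _)
  calc (M + 1) * ((γ.image (cubeIdx d a)).card : ℝ)
      ≤ (M + 1) * (2 * max D 0 / a + 3) ^ d := by
        gcongr
        exact card_image_cubeIdx_le ha (le_max_right _ _) hγD
    _ ≤ c + M := hcubes

theorem MeasureTheory.Measure.ae_injective_pi {ι E : Type*} [Fintype ι] [NormedAddCommGroup E]
    [NormedSpace ℝ E] [MeasurableSpace E] [BorelSpace E] [FiniteDimensional ℝ E] [Nontrivial E]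
    (μ : Measure E) [μ.IsAddHaarMeasure] :
    ∀ᵐ y ∂(Measure.pi fun _ : ι => μ), Function.Injective y := by
  classical
  simp only [Function.Injective, ae_all_iff]
  intro i j
  by_cases hij : i = j
  · exact Eventually.of_forall fun _ _ => hij
  let diff : (ι → E) →ₗ[ℝ] E :=
    LinearMap.proj (R := ℝ) (φ := fun _ : ι => E) i - LinearMap.proj j
  have hker : LinearMap.ker diff ≠ ⊤ := by
    obtain ⟨v, hv⟩ := exists_ne (0 : E)
    refine fun htop => hv ?_
    have : diff (Pi.single i v) = 0 := LinearMap.mem_ker.mp (htop ▸ Submodule.mem_top)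
    simpa [diff, Pi.single_eq_of_ne' hij] using this
  have hnull := Measure.addHaar_submodule (Measure.pi fun _ : ι => μ) _ hker
  refine measure_mono_null (fun y hy => ?_) hnull
  have hyij : y i = y j := by
    by_contra hne
    exact hy fun h => absurd h hne
  simp [diff, hyij]

lemma energy_confOf {d m : ℕ} (φ : ℝ → ℝ) {y : Fin m → Pt d} (hy : Function.Injective y) :
    energy d φ (confOf y) = (∑ p ∈ (Finset.univ : Finset (Fin m)).offDiag,
      φ (dist (y p.1) (y p.2))) / 2 := by
  have hoffDiag : (confOf y).offDiag = Finset.univ.offDiag.image (Prod.map y y) := by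
    ext ⟨u, v⟩
    simp only [confOf, Finset.mem_offDiag, Finset.mem_image, Finset.mem_univ, true_and,
      Prod.exists, Prod.map_apply, Prod.mk.injEq]
    constructor
    · rintro ⟨⟨i, rfl⟩, ⟨j, rfl⟩, hne⟩
      exact ⟨i, j, fun h => hne (congrArg y h), rfl, rfl⟩
    · rintro ⟨i, j, hne, rfl, rfl⟩
      exact ⟨⟨i, rfl⟩, ⟨j, rfl⟩, hy.ne hne⟩
  rw [energy, hoffDiag, Finset.sum_image fun p _ q _ h =>
    Prod.ext (hy (congrArg Prod.fst h)) (hy (congrArg Prod.snd h))]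
  rfl

lemma aemeasurable_energy_confOf {d : ℕ} (hd : 0 < d) {φ : ℝ → ℝ}
    (hφ : ContinuousOn φ (Set.Ioi 0)) (m : ℕ) :
    AEMeasurable (fun y : Fin m → Pt d => energy d φ (confOf y)) := by
  have : Nonempty (Fin d) := ⟨⟨0, hd⟩⟩
  classical
  -- `φ` need not be measurable at `0`; a.e. the points are distinct, so only `φ` on `(0, ∞)` enters.
  let ψ := (Set.Ioi (0 : ℝ)).piecewise φ 0
  have hψ : Measurable ψ := hφ.measurable_piecewise continuousOn_const measurableSet_Ioi
  refine ⟨fun y => (∑ p ∈ (Finset.univ : Finset (Fin m)).offDiag, ψ (dist (y p.1) (y p.2))) / 2,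
    ?_, ?_⟩
  · refine Measurable.div_const (Finset.measurable_sum _ fun p _ => ?_) _
    exact hψ.comp ((measurable_pi_apply p.1).dist (measurable_pi_apply p.2))
  · filter_upwards [Measure.ae_injective_pi (ι := Fin m) (volume : Measure (Pt d))] with y hy
    rw [energy_confOf φ hy]
    congr 1
    refine Finset.sum_congr rfl fun p hp => (Set.piecewise_eq_of_mem _ _ _ ?_).symm
    exact dist_pos.mpr (hy.ne (Finset.mem_offDiag.mp hp).2.2)

lemma measurable_cubeIdx (d : ℕ) (a : ℝ) : Measurable (cubeIdx d a) := by
  unfold cubeIdx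
  fun_prop

lemma chiM_confOf {d m : ℕ} (a : ℝ) (y : Fin m → Pt d) :
    chiM d a (confOf y) =
      if ∀ i j, cubeIdx d a (y i) = cubeIdx d a (y j) → y i = y j then 1 else 0 := by
  simp [chiM, confOf]

lemma measurable_chiM_confOf {d : ℕ} (a : ℝ) (m : ℕ) :
    Measurable fun y : Fin m → Pt d => chiM d a (confOf y) := by
  have hcube : ∀ i, Measurable fun y : Fin m → Pt d => cubeIdx d a (y i) :=
    fun i => (measurable_cubeIdx d a).comp (measurable_pi_apply i)
  simp_rw [chiM_confOf]
  refine Measurable.ite (Measurable.setOf ?_) measurable_const measurable_const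
  refine Measurable.forall fun i => Measurable.forall fun j => Measurable.imp ?_ ?_
  · exact measurableSet_setOfPred.mp (measurableSet_eq_fun (hcube i) (hcube j))
  · exact measurableSet_setOfPred.mp
      (measurableSet_eq_fun (measurable_pi_apply i) (measurable_pi_apply j))

lemma setOf_forall_mem_eq_univ_pi {ι α : Type*} (s : Set α) :
    {y : ι → α | ∀ i, y i ∈ s} = Set.univ.pi fun _ => s := by
  ext
  simp

lemma volume_setOf_forall_mem {d m : ℕ} (Λ : Set (Pt d)) :
    volume {y : Fin m → Pt d | ∀ i, y i ∈ Λ} = volume Λ ^ m := by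
  simp [setOf_forall_mem_eq_univ_pi, volume_pi_pi]

lemma eventually_chiM_eq_one {d : ℕ} (γ : Finset (Pt d)) :
    ∀ᶠ a in 𝓝[>] (0 : ℝ), chiM d a γ = 1 := by
  have hsmall : Tendsto (fun a : ℝ => a * Real.sqrt d) (𝓝[>] 0) (𝓝 0) :=
    ((continuous_mul_const _).tendsto' 0 0 (zero_mul _)).mono_left nhdsWithin_le_nhds
  have hsep : ∀ᶠ a in 𝓝[>] (0 : ℝ), ∀ p ∈ γ.offDiag, a * Real.sqrt d < dist p.1 p.2 :=
    (Filter.eventually_all_finset _).mpr fun p hp =>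
      hsmall.eventually (gt_mem_nhds (dist_pos.mpr (Finset.mem_offDiag.mp hp).2.2))
  filter_upwards [eventually_mem_nhdsWithin, hsep] with a (ha : 0 < a) hsep
  refine if_pos fun x hx y hy hxy => ?_
  by_contra hne
  exact (dist_le_of_cubeIdx_eq ha hxy).not_gt (hsep (x, y) (Finset.mem_offDiag.mpr ⟨hx, hy, hne⟩))

lemma abs_chiM_le_one {d : ℕ} (a : ℝ) (γ : Finset (Pt d)) : |chiM d a γ| ≤ 1 := by
  unfold chiM
  split_ifs <;> norm_num

lemma one_le_ZW {d : ℕ} {φ : ℝ → ℝ} {z : ℝ} (β : ℝ) (Λ : Set (Pt d)) {w : Finset (Pt d) → ℝ}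
    (hz : 0 ≤ z) (hw : ∀ γ, 0 ≤ w γ) : 1 ≤ ZW d φ z β Λ w := by
  refine le_add_of_nonneg_right (tsum_nonneg fun n => mul_nonneg (by positivity) ?_)
  exact integral_nonneg fun y => mul_nonneg (Real.exp_pos _).le (hw _)

section Convergence

variable {d : ℕ} {φ : ℝ → ℝ} {β C : ℝ} {Λ : Set (Pt d)}

lemma norm_boltzmann_mul_le (hβ : 0 ≤ β)
    (hstab : ∀ γ : Finset (Pt d), ↑γ ⊆ Λ → -C ≤ energy d φ γ) {w : Finset (Pt d) → ℝ}
    (hw : ∀ γ, |w γ| ≤ 1) {m : ℕ} {y : Fin m → Pt d} (hy : ∀ i, y i ∈ Λ) :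
    ‖Real.exp (-β * energy d φ (confOf y)) * w (confOf y)‖ ≤ Real.exp (β * C) := by
  have hconf : ↑(confOf y) ⊆ Λ := by
    intro x hx
    obtain ⟨i, -, rfl⟩ := Finset.mem_image.mp hx
    exact hy i
  have hexp : Real.exp (-β * energy d φ (confOf y)) ≤ Real.exp (β * C) :=
    Real.exp_le_exp.mpr (by nlinarith [hstab _ hconf])
  rw [norm_mul, Real.norm_of_nonneg (Real.exp_pos _).le, Real.norm_eq_abs]
  calc Real.exp (-β * energy d φ (confOf y)) * |w (confOf y)|
      ≤ Real.exp (β * C) * 1 := by gcongr; exact hw _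
    _ = Real.exp (β * C) := mul_one _

theorem tendsto_ZW {ι : Type*} {l : Filter ι} [l.IsCountablyGenerated] (hd : 0 < d)
    (hφ : ContinuousOn φ (Set.Ioi 0)) (z : ℝ) (hβ : 0 ≤ β) (hΛb : Bornology.IsBounded Λ)
    (hΛm : MeasurableSet Λ) (hstab : ∀ γ : Finset (Pt d), ↑γ ⊆ Λ → -C ≤ energy d φ γ)
    {w : ι → Finset (Pt d) → ℝ} {w₀ : Finset (Pt d) → ℝ} (hw : ∀ i γ, |w i γ| ≤ 1)
    (hwm : ∀ i m, AEStronglyMeasurable (fun y : Fin m → Pt d => w i (confOf y)))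
    (hlim : ∀ γ, Tendsto (fun i => w i γ) l (𝓝 (w₀ γ))) :
    Tendsto (fun i => ZW d φ z β Λ (w i)) l (𝓝 (ZW d φ z β Λ w₀)) := by
  set V := (volume Λ).toReal
  have hvol : ∀ m, volume {y : Fin m → Pt d | ∀ i, y i ∈ Λ} < ⊤ := fun m => by
    rw [volume_setOf_forall_mem]
    exact ENNReal.pow_lt_top hΛb.measure_lt_top
  have hS : ∀ m, MeasurableSet {y : Fin m → Pt d | ∀ i, y i ∈ Λ} := fun m => by
    rw [setOf_forall_mem_eq_univ_pi]
    exact MeasurableSet.univ_pi fun _ => hΛm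
  have hterm : ∀ i n, ‖(z ^ (n + 1) / (n + 1).factorial) *
      ∫ y in {y : Fin (n + 1) → Pt d | ∀ i, y i ∈ Λ},
        Real.exp (-β * energy d φ (confOf y)) * w i (confOf y)‖
      ≤ Real.exp (β * C) * ((|z| * V) ^ (n + 1) / (n + 1).factorial) := fun i n => by
    rw [norm_mul]
    have hint := norm_setIntegral_le_of_norm_le_const (hvol (n + 1))
      fun y hy => norm_boltzmann_mul_le hβ hstab (hw i) hy
    rw [measureReal_def, volume_setOf_forall_mem, ENNReal.toReal_pow] at hint
    calc ‖z ^ (n + 1) / (n + 1).factorial‖ * ‖∫ y in {y : Fin (n + 1) → Pt d | ∀ i, y i ∈ Λ},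
          Real.exp (-β * energy d φ (confOf y)) * w i (confOf y)‖
        ≤ |z| ^ (n + 1) / (n + 1).factorial * (Real.exp (β * C) * V ^ (n + 1)) := by
          rw [norm_div, norm_pow, Real.norm_eq_abs, RCLike.norm_natCast]
          gcongr
      _ = Real.exp (β * C) * ((|z| * V) ^ (n + 1) / (n + 1).factorial) := by ring
  have hsum : Summable fun n : ℕ => Real.exp (β * C) * ((|z| * V) ^ (n + 1) / (n + 1).factorial) :=
    ((summable_nat_add_iff 1).mpr (Real.summable_pow_div_factorial (|z| * V))).mul_left _
  refine (tendsto_tsum_of_dominated_convergence hsum (fun n => ?_)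
    (Eventually.of_forall hterm)).const_add 1
  refine Tendsto.const_mul _ (tendsto_integral_filter_of_dominated_convergence
    (fun _ => Real.exp (β * C)) ?_ ?_ (integrableOn_const (hvol (n + 1)).ne) ?_)
  · refine Eventually.of_forall fun i => ?_
    have := (aemeasurable_energy_confOf hd hφ (n + 1)).const_mul (-β)
    exact ((Real.measurable_exp.comp_aemeasurable this).aestronglyMeasurable.mul
      (hwm i (n + 1))).restrict
  · exact Eventually.of_forall fun i => (ae_restrict_iff' (hS (n + 1))).mpr
      (ae_of_all _ fun y hy => norm_boltzmann_mul_le hβ hstab (hw i) hy)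
  · exact ae_of_all _ fun y => (hlim (confOf y)).const_mul _

end Convergence

/-- Lemma 4.2.  Under Assumption (A) with `s > d`, for fixed `z, β > 0` and a
bounded measurable `Λ ⊂ ℝ^d`, `lim_{a→0⁺} Z_Λ^{(-)}(z,β,a)/Z_Λ(z,β) = 1`. -/
theorem partition_function_ratio_limit (d : ℕ) (hd : 1 ≤ d) (φ : ℝ → ℝ)
    (r₀ R φ₀ φ₁ ε₀ s : ℝ) (hA : AssumptionA d φ r₀ R φ₀ φ₁ ε₀ s) (hs : (d : ℝ) < s)
    (z β : ℝ) (hz : 0 < z) (hβ : 0 < β)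
    (Λ : Set (Pt d)) (hΛb : Bornology.IsBounded Λ) (hΛm : MeasurableSet Λ) :
    Tendsto (fun a : ℝ => ZΛm d φ z β a Λ / ZΛ d φ z β Λ) (𝓝[>] (0 : ℝ)) (𝓝 1) := by
  obtain ⟨C, hstab⟩ := hA.exists_energy_lower_bound hd hs hΛb
  have hlim : Tendsto (fun a => ZΛm d φ z β a Λ) (𝓝[>] 0) (𝓝 (ZΛ d φ z β Λ)) :=
    tendsto_ZW hd hA.cont z hβ.le hΛb hΛm hstab abs_chiM_le_one
      (fun a m => (measurable_chiM_confOf a m).aestronglyMeasurable)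
      fun γ => tendsto_const_nhds.congr' ((eventually_chiM_eq_one γ).mono fun _ h => h.symm)
  have hZ : ZΛ d φ z β Λ ≠ 0 :=
    (zero_lt_one.trans_le (one_le_ZW β Λ hz.le fun _ => zero_le_one)).ne'
  simpa [div_self hZ] using hlim.div_const (ZΛ d φ z β Λ)
end
end
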